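/- arXiv:1402.5801 — 4 statements merged into one kernel-verified Lean document; each statement's English description precedes it below -/
import Mathlib

section
/- For every real number r in the closed interval [1.375, 3] and every ε > 0, there exists a positive rational number x = α/β (with α, β positive integers) such that |λ(x) − r| < ε, where λ(x) = (108x⁴ + 132x² + 11)/(36x⁴ + 96x² + 8). -/
/-!
`λ` is continuous on `[0, ∞)` with `λ 0 = 11/8` and `λ x → 3` as `x → ∞`, so by the intermediate
value theorem its image of `[0, ∞)` contains `[11/8, 3)`, whose closure is `[11/8, 3]`. Positive
rationals are dense in `[0, ∞)`, hence by continuity their image is dense in the image of `[0, ∞)`.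
-/

open Set Filter Topology

noncomputable def spinSlope (x : ℝ) : ℝ :=
  (108 * x ^ 4 + 132 * x ^ 2 + 11) / (36 * x ^ 4 + 96 * x ^ 2 + 8)

lemma continuous_spinSlope : Continuous spinSlope :=
  .div (by fun_prop) (by fun_prop) fun x ↦ by positivity

lemma spinSlope_zero : spinSlope 0 = 11 / 8 := by
  norm_num [spinSlope]

lemma tendsto_spinSlope_atTop : Tendsto spinSlope atTop (𝓝 3) := by
  -- in the variable `y = (x ^ 2)⁻¹` the slope is a rational function continuous at `y = 0`
  let g : ℝ → ℝ := fun y ↦ (108 + 132 * y + 11 * y ^ 2) / (36 + 96 * y + 8 * y ^ 2)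
  have hg : Tendsto g (𝓝 0) (𝓝 3) := by
    have : ContinuousAt g 0 := .div (by fun_prop) (by fun_prop) (by norm_num)
    convert this.tendsto using 2
    norm_num [g]
  have hy : Tendsto (fun x : ℝ ↦ (x ^ 2)⁻¹) atTop (𝓝 0) :=
    tendsto_inv_atTop_zero.comp (tendsto_pow_atTop two_ne_zero)
  refine (hg.comp hy).congr' ?_
  filter_upwards [eventually_gt_atTop 0] with x hx
  simp only [Function.comp_apply, g, spinSlope]
  field_simp

lemma Ico_subset_spinSlope_image_Ici : Ico (11 / 8 : ℝ) 3 ⊆ spinSlope '' Ici 0 := by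
  rw [← spinSlope_zero]
  exact isPreconnected_Ici.intermediate_value_Ico self_mem_Ici
    (le_principal_iff.mpr (Ici_mem_atTop 0)) continuous_spinSlope.continuousOn tendsto_spinSlope_atTop

lemma Ici_subset_closure_Ioi_inter_range_ratCast (a : ℝ) :
    Ici a ⊆ closure (Ioi a ∩ range ((↑) : ℚ → ℝ)) := by
  rw [← closure_Ioi]
  exact closure_minimal (Rat.denseRange_cast.open_subset_closure_inter isOpen_Ioi) isClosed_closure

lemma Icc_subset_closure_spinSlope_image_pos_rat :
    Icc (11 / 8 : ℝ) 3 ⊆ closure (spinSlope '' (Ioi 0 ∩ range ((↑) : ℚ → ℝ))) := by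
  rw [← closure_Ico (by norm_num)]
  refine closure_minimal (Ico_subset_spinSlope_image_Ici.trans ?_) isClosed_closure
  exact (image_mono (Ici_subset_closure_Ioi_inter_range_ratCast 0)).trans
    (image_closure_subset_closure_image continuous_spinSlope)

lemma Rat.exists_nat_div_eq_cast_of_pos {K : Type*} [DivisionRing K] [CharZero K] {q : ℚ}
    (hq : 0 < q) : ∃ α β : ℕ, 0 < α ∧ 0 < β ∧ (α : K) / β = q := by
  have hnum : 0 < q.num := Rat.num_pos.mpr hq
  refine ⟨q.num.toNat, q.den, by omega, q.pos, ?_⟩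
  rw [Rat.cast_def]
  congr 1
  exact_mod_cast Int.toNat_of_nonneg hnum.le

/-- For every real `r ∈ [1.375, 3]` and every `ε > 0`, there is a positive
rational `x = α/β` (with `α, β` positive integers) such that
`|λ(x) − r| < ε`, where `λ(x) = (108x⁴ + 132x² + 11)/(36x⁴ + 96x² + 8)`. -/
theorem spin_slopes_dense :
    ∀ r ∈ Set.Icc (1.375 : ℝ) 3, ∀ ε > (0 : ℝ), ∃ α β : ℕ, 0 < α ∧ 0 < β ∧
      |(108 * ((α : ℝ) / β) ^ 4 + 132 * ((α : ℝ) / β) ^ 2 + 11) /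
          (36 * ((α : ℝ) / β) ^ 4 + 96 * ((α : ℝ) / β) ^ 2 + 8) - r| < ε := by
  intro r hr ε hε
  have hr' : r ∈ Icc (11 / 8 : ℝ) 3 := by norm_num at hr ⊢; exact hr
  obtain ⟨_, ⟨x, ⟨hx, q, rfl⟩, rfl⟩, hdist⟩ :=
    Metric.mem_closure_iff.mp (Icc_subset_closure_spinSlope_image_pos_rat hr') ε hε
  obtain ⟨α, β, hα, hβ, hq⟩ := Rat.exists_nat_div_eq_cast_of_pos (K := ℝ) (Rat.cast_pos.mp (mem_Ioi.mp hx))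
  refine ⟨α, β, hα, hβ, ?_⟩
  change |spinSlope (α / β) - r| < ε
  rwa [hq, abs_sub_comm, ← Real.dist_eq]
end

section
/- For any prime p ≥ 5, writing c(q, m) := 12·s(q, m) + l(q, m) where s is the Dedekind sum and l is the length of the Hirzebruch–Jung continued fraction of m/q, one has c(4p − 1, 4p) = (4p − 1)/(2p). -/
/-- The length `l(q, m)` of the Hirzebruch–Jung continued fraction
`m/q = e₁ − 1/(e₂ − 1/(⋯ − 1/e_l))` (all `eᵢ ≥ 2`), computed by the
Hirzebruch–Jung algorithm: `e = ⌈m/q⌉` and the next pair is `(q, q⌈m/q⌉ − m)`.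
`hjLength m q` is `l(q, m)`. -/
def hjLength : ℕ → ℕ → ℕ
  | _, 0 => 0
  | m, q + 1 => 1 + hjLength (q + 1) ((q + 1) * ((m + q) / (q + 1)) - m)
termination_by m q => q
decreasing_by
  have h : (m + q) / (q + 1) * (q + 1) ≤ m + q := Nat.div_mul_le_self _ _
  have h2 : (q + 1) * ((m + q) / (q + 1)) = (m + q) / (q + 1) * (q + 1) := Nat.mul_comm _ _
  omega

/-- Evaluation of a Hirzebruch–Jung continued fraction `[e₁, …, e_l]` as the
rational number `e₁ − 1/(e₂ − 1/(⋯ − 1/e_l))`. -/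
def hjEval : List ℕ → ℚ
  | [] => 0
  | [e] => (e : ℚ)
  | e :: rest => (e : ℚ) - 1 / hjEval rest


/-- The sawtooth function `((x)) = x − ⌊x⌋ − 1/2` for non-integer `x`, and `0` for
integer `x`. -/
def sawtooth (x : ℚ) : ℚ := if (⌊x⌋ : ℚ) = x then 0 else x - ⌊x⌋ - 1 / 2

/-- The Dedekind sum `s(q, m) = Σ_{i=1}^{m−1} ((i/m)) ((iq/m))`. -/
def dedekindSum (q m : ℕ) : ℚ :=
  ∑ i ∈ Finset.Ico 1 m, sawtooth ((i : ℚ) / m) * sawtooth ((i * q : ℚ) / m)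

/-- `c(q, m) := 12·s(q, m) + l(q, m)`, with `s` the Dedekind sum and `l` the length of
the Hirzebruch–Jung continued fraction of `m/q`. -/
def hjDedekindC (q m : ℕ) : ℚ := 12 * dedekindSum q m + (hjLength m q : ℚ)

/-! Since `4p - 1 ≡ -1 (mod 4p)`, this is the case `q = m - 1` of a general identity
`c(m - 1, m) = 2(m - 1)/m`. The Hirzebruch–Jung expansion of `m/(m - 1)` is `[2, 2, …, 2]`
with `m - 1` entries. For the Dedekind sum, `i(m - 1)/m = i - i/m` and the sawtooth is odd
and `1`-periodic, so `s(m - 1, m) = -∑_{i=1}^{m-1} (i/m - 1/2)² = -(m - 1)(m - 2)/(12m)`. -/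

theorem hjLength_succ_self (n : ℕ) : hjLength (n + 1) n = n := by
  induction n with
  | zero => rw [hjLength]
  | succ n ih =>
    have hceil : (n + 1 + 1 + n) / (n + 1) = 2 := by
      rw [show n + 1 + 1 + n = 2 * (n + 1) by ring, Nat.mul_div_cancel _ n.succ_pos]
    rw [hjLength, hceil, show (n + 1) * 2 - (n + 1 + 1) = n by omega, ih]
    ring

theorem sawtooth_eq_ite_fract (x : ℚ) :
    sawtooth x = if Int.fract x = 0 then 0 else Int.fract x - 1 / 2 := by
  simp only [sawtooth, ← Int.self_sub_floor, sub_eq_zero, eq_comm, sub_sub]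

theorem sawtooth_of_mem_Ioo {x : ℚ} (hx : x ∈ Set.Ioo 0 1) : sawtooth x = x - 1 / 2 := by
  rw [sawtooth_eq_ite_fract, Int.fract_eq_self.mpr ⟨hx.1.le, hx.2⟩, if_neg hx.1.ne']

theorem sawtooth_intCast_sub (k : ℤ) (x : ℚ) : sawtooth (k - x) = -sawtooth x := by
  simp only [sawtooth_eq_ite_fract, sub_eq_add_neg, Int.fract_intCast_add, Int.fract_neg_eq_zero]
  split_ifs with h
  · exact neg_zero.symm
  · rw [Int.fract_neg h]; ring

theorem sum_range_sq_two_mul_sub (n : ℕ) (a : ℚ) :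
    ∑ i ∈ Finset.range n, (2 * (i : ℚ) - a) ^ 2
      = 2 * n * ((n : ℚ) - 1) * (2 * n - 1) / 3 - 2 * a * n * (n - 1) + n * a ^ 2 := by
  induction n with
  | zero => simp
  | succ n ih => rw [Finset.sum_range_succ, ih]; push_cast; ring

theorem sum_Ico_one_sq_two_mul_sub (m : ℕ) :
    ∑ i ∈ Finset.Ico 1 m, (2 * (i : ℚ) - m) ^ 2 = (m : ℚ) * (m - 1) * (m - 2) / 3 := by
  rcases m.eq_zero_or_pos with rfl | hm
  · simp
  have h := sum_range_sq_two_mul_sub m m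
  rw [Finset.sum_range_eq_add_Ico _ hm, Nat.cast_zero] at h
  linear_combination h

theorem dedekindSum_pred_self (m : ℕ) :
    dedekindSum (m - 1) m = -(((m : ℚ) - 1) * (m - 2)) / (12 * m) := by
  rcases m.eq_zero_or_pos with rfl | hm
  · simp [dedekindSum]
  have hm' : (0 : ℚ) < m := by exact_mod_cast hm
  have hterm : ∀ i ∈ Finset.Ico 1 m,
      sawtooth ((i : ℚ) / m) * sawtooth ((i * (m - 1 : ℕ) : ℚ) / m)
        = -(2 * (i : ℚ) - m) ^ 2 / (4 * m ^ 2) := by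
    intro i hi
    obtain ⟨hi1, him⟩ := Finset.mem_Ico.mp hi
    have hmem : (i : ℚ) / m ∈ Set.Ioo 0 1 :=
      ⟨by positivity, (div_lt_one hm').mpr (by exact_mod_cast him)⟩
    have hsub : (i * (m - 1 : ℕ) : ℚ) / m = ((i : ℤ) : ℚ) - i / m := by
      rw [Nat.cast_sub hm]; field_simp; push_cast; ring
    rw [hsub, sawtooth_intCast_sub, sawtooth_of_mem_Ioo hmem]
    field_simp
    ring
  rw [dedekindSum, Finset.sum_congr rfl hterm, ← Finset.sum_div, Finset.sum_neg_distrib,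
    sum_Ico_one_sq_two_mul_sub]
  field_simp
  ring

theorem hjDedekindC_pred_self (m : ℕ) : hjDedekindC (m - 1) m = 2 * ((m : ℚ) - 1) / m := by
  rcases m with _ | n
  · simp [hjDedekindC, dedekindSum, hjLength]
  rw [hjDedekindC, dedekindSum_pred_self, Nat.add_sub_cancel, hjLength_succ_self]
  push_cast
  field_simp
  ring

theorem c_fourPSubOne_general (p : ℕ) :
    hjDedekindC (4 * p - 1) (4 * p) = ((4 * p : ℚ) - 1) / (2 * p) := by
  rw [hjDedekindC_pred_self]
  push_cast
  rw [show (4 * p : ℚ) = 2 * (2 * p) by ring, mul_div_mul_left _ _ two_ne_zero]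

/-- for any prime `p ≥ 5`, `c(4p−1, 4p) = (4p−1)/(2p)`. -/
theorem c_fourPSubOne (p : ℕ) (hp : p.Prime) (h5 : 5 ≤ p) :
    hjDedekindC (4 * p - 1) (4 * p) = ((4 * p : ℚ) - 1) / (2 * p) :=
  c_fourPSubOne_general p
end

section
/- For any prime p ≥ 5, c(2p + 1, 4p) = (2p² + 1)/(2p), where c(q, m) = 12·s(q, m) + l(q, m). -/
/-!
Since `(2p+1)² ≡ 1 [MOD 4p]`, multiplication by `2p+1` fixes the even residues mod `4p` and
shifts the odd ones by `2p`. The Dedekind sum therefore splits into three sums of quadratic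
polynomials, the two odd ones being equal, and evaluates to `(2p² − 6p + 1)/(24p)`. The
Hirzebruch–Jung expansion is `4p/(2p+1) = [2, p+1, 2]`, of length `3`.
-/

open Finset

/-- `e = ⌈m/q⌉`, given by its defining inequalities. -/
lemma hjLength_eq_one_add {m q e : ℕ} (hlo : q * (e - 1) < m) (hhi : m ≤ q * e) :
    hjLength m q = 1 + hjLength q (q * e - m) := by
  obtain _ | q := q
  · omega
  have hceil : (m + q) / (q + 1) = e := by
    obtain _ | e := e
    · omega
    apply Nat.div_eq_of_lt_le <;>
      simp only [Nat.add_sub_cancel, Nat.succ_mul, Nat.mul_succ, Nat.mul_comm] at * <;> omega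
  rw [hjLength.eq_2, hceil]

lemma hjLength_four_mul_two_mul_add_one {p : ℕ} (hp : 0 < p) :
    hjLength (4 * p) (2 * p + 1) = 3 := by
  rw [hjLength_eq_one_add (e := 2) (by omega) (by omega),
    show (2 * p + 1) * 2 - 4 * p = 2 by omega,
    hjLength_eq_one_add (e := p + 1) (by omega) (by omega),
    show 2 * (p + 1) - (2 * p + 1) = 1 by omega,
    hjLength_eq_one_add (e := 2) (by omega) (by omega)]
  simp [hjLength]

lemma sawtooth_natCast_div {a m : ℕ} (hm : 0 < m) (ha : ¬ m ∣ a) :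
    sawtooth ((a : ℚ) / m) = ((a % m : ℕ) : ℚ) / m - 1 / 2 := by
  have hfract : Int.fract ((a : ℚ) / m) ≠ 0 := by
    rw [Int.fract_div_natCast_eq_div_natCast_mod]
    exact div_ne_zero (by exact_mod_cast mt Nat.dvd_of_mod_eq_zero ha) (by exact_mod_cast hm.ne')
  rw [sawtooth, if_neg (fun h => hfract (by rw [← Int.self_sub_floor, h, sub_self])),
    Int.self_sub_floor, Int.fract_div_natCast_eq_div_natCast_mod]

/-- The added term `i = 0` contributes the `1/4`. -/
lemma dedekindSum_eq_sum_range {q m : ℕ} (hm : 0 < m) (hqm : q.Coprime m) :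
    dedekindSum q m =
      ∑ i ∈ range m, ((i : ℚ) / m - 1 / 2) * (((i * q % m : ℕ) : ℚ) / m - 1 / 2) - 1 / 4 := by
  have hzero : (((0 : ℕ) : ℚ) / m - 1 / 2) * (((0 * q % m : ℕ) : ℚ) / m - 1 / 2) = 1 / 4 := by
    norm_num
  rw [range_eq_Ico, sum_eq_sum_Ico_succ_bot hm, hzero, add_sub_cancel_left, dedekindSum]
  refine sum_congr rfl fun i hi => ?_
  obtain ⟨hi1, him⟩ := mem_Ico.1 hi
  have hndvd : ¬ m ∣ i := fun h => by have := Nat.le_of_dvd hi1 h; omega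
  rw [sawtooth_natCast_div hm hndvd, ← Nat.cast_mul,
    sawtooth_natCast_div hm fun h => hndvd ((Nat.Coprime.symm hqm).dvd_of_dvd_mul_right h),
    Nat.mod_eq_of_lt him]

lemma sum_range_two_mul {M : Type*} [AddCommMonoid M] (f : ℕ → M) (n : ℕ) :
    ∑ i ∈ range (2 * n), f i = ∑ j ∈ range n, (f (2 * j) + f (2 * j + 1)) := by
  induction n with
  | zero => simp
  | succ n ih => rw [Nat.mul_succ, sum_range_succ, sum_range_succ, ih, sum_range_succ, add_assoc]

lemma sum_range_quadratic {K : Type*} [Field K] [CharZero K] (n : ℕ) (a b c : K) :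
    ∑ j ∈ range n, (a * (j : K) ^ 2 + b * j + c) =
      a * (n * (n - 1) * (2 * n - 1) / 6) + b * (n * (n - 1) / 2) + c * n := by
  induction n with
  | zero => simp
  | succ n ih => rw [sum_range_succ, ih]; push_cast; ring

lemma dedekindSum_two_mul_add_one_four_mul {p : ℕ} (hp : 0 < p) :
    dedekindSum (2 * p + 1) (4 * p) = (2 * (p : ℚ) ^ 2 - 6 * p + 1) / (24 * p) := by
  have hcop : (2 * p + 1).Coprime (4 * p) := by
    refine Nat.coprime_of_mul_modEq_one (2 * p + 1) ?_
    rw [show (2 * p + 1) * (2 * p + 1) = 1 + 4 * p * (p + 1) by ring]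
    exact Nat.ModEq.symm (Nat.modEq_iff_dvd' (by omega) |>.2 (by simp))
  rw [dedekindSum_eq_sum_range (by omega) hcop]
  set F : ℕ → ℚ := fun i =>
    ((i : ℚ) / ↑(4 * p) - 1 / 2) * (((i * (2 * p + 1) % (4 * p) : ℕ) : ℚ) / ↑(4 * p) - 1 / 2)
  have hpQ : (p : ℚ) ≠ 0 := by exact_mod_cast hp.ne'
  have heven (j : ℕ) (hj : j < 2 * p) :
      F (2 * j) = 1 / (4 * p ^ 2) * (j : ℚ) ^ 2 + -1 / (2 * p) * j + 1 / 4 := by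
    simp only [F]
    rw [show 2 * j * (2 * p + 1) = 2 * j + 4 * p * j by ring, Nat.add_mul_mod_self_left,
      Nat.mod_eq_of_lt (by omega)]
    push_cast; field_simp; ring
  -- both odd halves give `t (t - 1/2)` with `t = (2j+1)/(4p)`
  have hodd (j : ℕ) (hj : j < p) :
      F (2 * j + 1) = 1 / (4 * p ^ 2) * (j : ℚ) ^ 2 + (1 - p) / (4 * p ^ 2) * j
        + (1 - 2 * p) / (16 * p ^ 2) := by
    simp only [F]
    rw [show (2 * j + 1) * (2 * p + 1) = (2 * j + 1 + 2 * p) + 4 * p * j by ring,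
      Nat.add_mul_mod_self_left, Nat.mod_eq_of_lt (by omega)]
    push_cast; field_simp; ring
  have hodd' (j : ℕ) (hj : j < p) : F (2 * (p + j) + 1) = F (2 * j + 1) := by
    simp only [F]
    rw [show (2 * (p + j) + 1) * (2 * p + 1) = (2 * j + 1) + 4 * p * (p + j + 1) by ring,
      show (2 * j + 1) * (2 * p + 1) = (2 * j + 1 + 2 * p) + 4 * p * j by ring,
      Nat.add_mul_mod_self_left, Nat.add_mul_mod_self_left, Nat.mod_eq_of_lt (by omega),
      Nat.mod_eq_of_lt (by omega)]
    push_cast; field_simp; ring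
  have hsum_odd : ∑ j ∈ range (2 * p), F (2 * j + 1) = 2 * ∑ j ∈ range p, F (2 * j + 1) := by
    rw [two_mul p, sum_range_add, sum_congr rfl fun j hj => hodd' j (mem_range.1 hj), two_mul]
  rw [show 4 * p = 2 * (2 * p) by ring, sum_range_two_mul, sum_add_distrib, hsum_odd,
    sum_congr rfl fun j hj => heven j (mem_range.1 hj),
    sum_congr rfl fun j hj => hodd j (mem_range.1 hj), sum_range_quadratic, sum_range_quadratic]
  push_cast; field_simp; ring

theorem c_twoPAddOne_general (p : ℕ) (h5 : 5 ≤ p) :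
    hjDedekindC (2 * p + 1) (4 * p) = (2 * (p : ℚ) ^ 2 + 1) / (2 * p) := by
  have hp : 0 < p := by omega
  rw [hjDedekindC, dedekindSum_two_mul_add_one_four_mul hp, hjLength_four_mul_two_mul_add_one hp]
  have hpQ : (p : ℚ) ≠ 0 := by exact_mod_cast hp.ne'
  push_cast; field_simp; ring

/-- for any prime `p ≥ 5`, `c(2p+1, 4p) = (2p²+1)/(2p)`. -/
theorem c_twoPAddOne (p : ℕ) (hp : p.Prime) (h5 : 5 ≤ p) :
    hjDedekindC (2 * p + 1) (4 * p) = (2 * (p : ℚ) ^ 2 + 1) / (2 * p) :=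
  c_twoPAddOne_general p h5
end

section
/- Define, for positive integers α, β, d and prime p, with n = 12αp: c̄₁² = n⁴ + 2t₂ − 40d − 48 and c̄₂ = n⁴/3 + t₂ − 16d − 12, with t₂, t_{2,1}, t_{2,2} as in the spin construction; set C₁²(p) = 4p·c̄₁² − 2(t₂ + 2G) + S/(4p) − ((4p−1)/(2p))t_{2,1} − ((2p²+1)/(2p))t_{2,2} and C₂(p) = 4p·c̄₂ − (t₂ + 2G) + (4p−1)t_{2,1} + 3t_{2,2}, where G and S are any functions of p growing at most like O(p³). Then lim_{p→∞} C₁²(p)/C₂(p) = (108x⁴ + 132x² + 11)/(36x⁴ + 96x² + 8) with x = α/β. -/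
/-!
Both `C₁²(p)` and `C₂(p)` are, up to the error terms `G` and `S`, Laurent polynomials in `p`
of degree five: the factors `(4p − 1)/(2p)` and `(2p² + 1)/(2p)` only add terms of lower
order. Dividing by `p⁵` turns each into a polynomial in `u = 1/p` plus terms bounded by
`O(1/p²)`, so the ratio tends to the quotient of the constant terms, which is the claimed
function of `α/β` after cancelling the common factor `768 β⁴`.
-/

open Filter Topology Asymptotics

lemma tendsto_div_pow_atTop_of_abs_le {f : ℕ → ℝ} {C : ℝ} {m k : ℕ}
    (hf : ∀ p, |f p| ≤ C * (p : ℝ) ^ m) (hmk : m < k) :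
    Tendsto (fun p => f p / (p : ℝ) ^ k) atTop (𝓝 0) := by
  have hf_bigO : f =O[atTop] fun p : ℕ => (p : ℝ) ^ m :=
    IsBigO.of_bound C <| Eventually.of_forall fun p => by
      simpa [Real.norm_eq_abs, abs_of_nonneg (pow_nonneg (Nat.cast_nonneg (α := ℝ) p) m)] using hf p
  exact (hf_bigO.trans_isLittleO ((isLittleO_pow_pow_atTop_of_lt hmk).comp_tendsto
    tendsto_natCast_atTop_atTop)).tendsto_div_nhds_zero

lemma tendsto_div_of_tendsto_div_pow {f g : ℕ → ℝ} {k : ℕ} {a b : ℝ}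
    (hf : Tendsto (fun p => f p / (p : ℝ) ^ k) atTop (𝓝 a))
    (hg : Tendsto (fun p => g p / (p : ℝ) ^ k) atTop (𝓝 b)) (hb : b ≠ 0) :
    Tendsto (fun p => f p / g p) atTop (𝓝 (a / b)) := by
  refine (hf.div hg hb).congr' ?_
  filter_upwards [eventually_ge_atTop 1] with p hp
  have hpk : (p : ℝ) ^ k ≠ 0 := pow_ne_zero k (Nat.cast_ne_zero.mpr (by omega))
  exact div_div_div_cancel_right₀ hpk (f p) (g p)

lemma tendsto_comp_inv_natCast {F : ℝ → ℝ} (hF : Continuous F) :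
    Tendsto (fun p : ℕ => F (p : ℝ)⁻¹) atTop (𝓝 (F 0)) :=
  (hF.tendsto 0).comp (tendsto_inv_atTop_zero.comp tendsto_natCast_atTop_atTop)

section SpinConstruction

variable (α β d : ℕ)

noncomputable def spinT2 (q : ℝ) : ℝ :=
  13824 * (β : ℝ) ^ 2 * (α : ℝ) ^ 2 * q ^ 4 + 1152 * (β : ℝ) ^ 4 * q ^ 4 +
    4608 * (d : ℝ) * (α : ℝ) ^ 2 * q ^ 2 + 768 * (d : ℝ) * (β : ℝ) ^ 2 * q ^ 2 +
    32 * (d : ℝ) ^ 2 - 100 * (d : ℝ)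

noncomputable def spinT21 (q : ℝ) : ℝ :=
  384 * (β : ℝ) ^ 4 * q ^ 4 + 4608 * (α : ℝ) ^ 2 * (β : ℝ) ^ 2 * q ^ 4 +
    2304 * (d : ℝ) * (α : ℝ) ^ 2 * q ^ 2 - 52 * (d : ℝ) +
    384 * (d : ℝ) * (β : ℝ) ^ 2 * q ^ 2 + 16 * (d : ℝ) ^ 2

noncomputable def spinT22 (q : ℝ) : ℝ :=
  768 * (β : ℝ) ^ 4 * q ^ 4 + 9216 * (α : ℝ) ^ 2 * (β : ℝ) ^ 2 * q ^ 4 +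
    2304 * (d : ℝ) * (α : ℝ) ^ 2 * q ^ 2 - 48 * (d : ℝ) +
    384 * (d : ℝ) * (β : ℝ) ^ 2 * q ^ 2 + 16 * (d : ℝ) ^ 2

/-- `C₁²` at `q = p`, with `g = G p` and `s = S p`. -/
noncomputable def chernC1Sq (g s q : ℝ) : ℝ :=
  4 * q * ((12 * (α : ℝ) * q) ^ 4 + 2 * spinT2 α β d q - 40 * (d : ℝ) - 48) -
    2 * (spinT2 α β d q + 2 * g) + s / (4 * q) -
    ((4 * q - 1) / (2 * q)) * spinT21 α β d q - ((2 * q ^ 2 + 1) / (2 * q)) * spinT22 α β d q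

/-- `C₂` at `q = p`, with `g = G p`. -/
noncomputable def chernC2 (g q : ℝ) : ℝ :=
  4 * q * ((12 * (α : ℝ) * q) ^ 4 / 3 + spinT2 α β d q - 16 * (d : ℝ) - 12) -
    (spinT2 α β d q + 2 * g) + (4 * q - 1) * spinT21 α β d q + 3 * spinT22 α β d q

/-- `q⁻⁵ · chernC1Sq 0 0 q`, written as a polynomial in `u = q⁻¹`. -/
noncomputable def chernC1SqRev (u : ℝ) : ℝ :=
  (82944 * (α : ℝ) ^ 4 + 101376 * (α : ℝ) ^ 2 * (β : ℝ) ^ 2 + 8448 * (β : ℝ) ^ 4)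
  + (-36864 * (α : ℝ) ^ 2 * (β : ℝ) ^ 2 - 3072 * (β : ℝ) ^ 4) * u
  + (34560 * (α : ℝ) ^ 2 * (d : ℝ) + 5760 * (β : ℝ) ^ 2 * (d : ℝ) - 192 * (β : ℝ) ^ 4
      - 2304 * (α : ℝ) ^ 2 * (β : ℝ) ^ 2) * u ^ 2
  + (-13824 * (α : ℝ) ^ 2 * (d : ℝ) - 2304 * (β : ℝ) ^ 2 * (d : ℝ)) * u ^ 3
  + (240 * (d : ℝ) ^ 2 - 912 * (d : ℝ) - 192) * u ^ 4
  + (-96 * (d : ℝ) ^ 2 + 304 * (d : ℝ)) * u ^ 5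
  + (-2 * (d : ℝ)) * u ^ 6

/-- `q⁻⁵ · chernC2 0 q`, written as a polynomial in `u = q⁻¹`. -/
noncomputable def chernC2Rev (u : ℝ) : ℝ :=
  (27648 * (α : ℝ) ^ 4 + 73728 * (α : ℝ) ^ 2 * (β : ℝ) ^ 2 + 6144 * (β : ℝ) ^ 4)
  + (9216 * (α : ℝ) ^ 2 * (β : ℝ) ^ 2 + 768 * (β : ℝ) ^ 4) * u
  + (27648 * (α : ℝ) ^ 2 * (d : ℝ) + 4608 * (β : ℝ) ^ 2 * (d : ℝ)) * u ^ 2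
  + (192 * (d : ℝ) ^ 2 - 672 * (d : ℝ) - 48) * u ^ 4
  + (8 * (d : ℝ)) * u ^ 5

lemma chernC1Sq_div_pow_five {q : ℝ} (hq : q ≠ 0) (g s : ℝ) :
    chernC1Sq α β d g s q / q ^ 5 = chernC1SqRev α β d q⁻¹ - 4 * (g / q ^ 5) + s / q ^ 6 / 4 := by
  unfold chernC1Sq chernC1SqRev spinT2 spinT21 spinT22
  field_simp
  ring

lemma chernC2_div_pow_five {q : ℝ} (hq : q ≠ 0) (g : ℝ) :
    chernC2 α β d g q / q ^ 5 = chernC2Rev α β d q⁻¹ - 2 * (g / q ^ 5) := by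
  unfold chernC2 chernC2Rev spinT2 spinT21 spinT22
  field_simp
  ring

variable {α β d}

lemma tendsto_chernC1Sq_div_pow_five {G S : ℕ → ℝ} {CG CS : ℝ}
    (hG : ∀ p : ℕ, |G p| ≤ CG * (p : ℝ) ^ 3) (hS : ∀ p : ℕ, |S p| ≤ CS * (p : ℝ) ^ 3) :
    Tendsto (fun p : ℕ => chernC1Sq α β d (G p) (S p) p / (p : ℝ) ^ 5) atTop
      (𝓝 (82944 * (α : ℝ) ^ 4 + 101376 * (α : ℝ) ^ 2 * (β : ℝ) ^ 2 + 8448 * (β : ℝ) ^ 4)) := by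
  have hrev := tendsto_comp_inv_natCast (F := chernC1SqRev α β d)
    (by unfold chernC1SqRev; fun_prop)
  have hG5 := tendsto_div_pow_atTop_of_abs_le hG (by norm_num : 3 < 5)
  have hS6 := tendsto_div_pow_atTop_of_abs_le hS (by norm_num : 3 < 6)
  have hlim := (hrev.sub (hG5.const_mul 4)).add (hS6.div_const 4)
  have hrev0 : chernC1SqRev α β d 0 =
      82944 * (α : ℝ) ^ 4 + 101376 * (α : ℝ) ^ 2 * (β : ℝ) ^ 2 + 8448 * (β : ℝ) ^ 4 := by
    simp [chernC1SqRev]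
  rw [hrev0, mul_zero, sub_zero, zero_div, add_zero] at hlim
  refine hlim.congr' ?_
  filter_upwards [eventually_ge_atTop 1] with p hp
  exact (chernC1Sq_div_pow_five α β d (q := p) (Nat.cast_ne_zero.mpr (by omega)) _ _).symm

lemma tendsto_chernC2_div_pow_five {G : ℕ → ℝ} {CG : ℝ}
    (hG : ∀ p : ℕ, |G p| ≤ CG * (p : ℝ) ^ 3) :
    Tendsto (fun p : ℕ => chernC2 α β d (G p) p / (p : ℝ) ^ 5) atTop
      (𝓝 (27648 * (α : ℝ) ^ 4 + 73728 * (α : ℝ) ^ 2 * (β : ℝ) ^ 2 + 6144 * (β : ℝ) ^ 4)) := by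
  have hrev := tendsto_comp_inv_natCast (F := chernC2Rev α β d)
    (by unfold chernC2Rev; fun_prop)
  have hlim := hrev.sub ((tendsto_div_pow_atTop_of_abs_le hG (by norm_num : 3 < 5)).const_mul 2)
  have hrev0 : chernC2Rev α β d 0 =
      27648 * (α : ℝ) ^ 4 + 73728 * (α : ℝ) ^ 2 * (β : ℝ) ^ 2 + 6144 * (β : ℝ) ^ 4 := by
    simp [chernC2Rev]
  rw [hrev0, mul_zero, sub_zero] at hlim
  refine hlim.congr' ?_
  filter_upwards [eventually_ge_atTop 1] with p hp
  exact (chernC2_div_pow_five α β d (q := p) (Nat.cast_ne_zero.mpr (by omega)) _).symm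

end SpinConstruction

lemma slope_leading_ratio_eq {α β : ℝ} (hβ : β ≠ 0) :
    (82944 * α ^ 4 + 101376 * α ^ 2 * β ^ 2 + 8448 * β ^ 4) /
        (27648 * α ^ 4 + 73728 * α ^ 2 * β ^ 2 + 6144 * β ^ 4) =
      (108 * (α / β) ^ 4 + 132 * (α / β) ^ 2 + 11) / (36 * (α / β) ^ 4 + 96 * (α / β) ^ 2 + 8) := by
  field_simp
  ring

theorem spin_chern_slope_limit_general (α β d : ℕ) (hβ : 0 < β)
    (G S : ℕ → ℝ) (CG CS : ℝ)
    (hG : ∀ p : ℕ, |G p| ≤ CG * (p : ℝ) ^ 3) (hS : ∀ p : ℕ, |S p| ≤ CS * (p : ℝ) ^ 3) :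
    Tendsto (fun p : ℕ =>
      let q : ℝ := (p : ℝ)
      let t2 : ℝ := 13824 * (β : ℝ) ^ 2 * (α : ℝ) ^ 2 * q ^ 4 + 1152 * (β : ℝ) ^ 4 * q ^ 4 +
        4608 * (d : ℝ) * (α : ℝ) ^ 2 * q ^ 2 + 768 * (d : ℝ) * (β : ℝ) ^ 2 * q ^ 2 +
        32 * (d : ℝ) ^ 2 - 100 * (d : ℝ)
      let t21 : ℝ := 384 * (β : ℝ) ^ 4 * q ^ 4 + 4608 * (α : ℝ) ^ 2 * (β : ℝ) ^ 2 * q ^ 4 +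
        2304 * (d : ℝ) * (α : ℝ) ^ 2 * q ^ 2 - 52 * (d : ℝ) +
        384 * (d : ℝ) * (β : ℝ) ^ 2 * q ^ 2 + 16 * (d : ℝ) ^ 2
      let t22 : ℝ := 768 * (β : ℝ) ^ 4 * q ^ 4 + 9216 * (α : ℝ) ^ 2 * (β : ℝ) ^ 2 * q ^ 4 +
        2304 * (d : ℝ) * (α : ℝ) ^ 2 * q ^ 2 - 48 * (d : ℝ) +
        384 * (d : ℝ) * (β : ℝ) ^ 2 * q ^ 2 + 16 * (d : ℝ) ^ 2
      let n4 : ℝ := (12 * (α : ℝ) * q) ^ 4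
      let cbar1 : ℝ := n4 + 2 * t2 - 40 * (d : ℝ) - 48
      let cbar2 : ℝ := n4 / 3 + t2 - 16 * (d : ℝ) - 12
      let C1 : ℝ := 4 * q * cbar1 - 2 * (t2 + 2 * G p) + S p / (4 * q) -
        ((4 * q - 1) / (2 * q)) * t21 - ((2 * q ^ 2 + 1) / (2 * q)) * t22
      let C2 : ℝ := 4 * q * cbar2 - (t2 + 2 * G p) + (4 * q - 1) * t21 + 3 * t22
      C1 / C2)
      (atTop ⊓ Filter.principal {p : ℕ | p.Prime})
      (nhds ((108 * ((α : ℝ) / β) ^ 4 + 132 * ((α : ℝ) / β) ^ 2 + 11) /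
        (36 * ((α : ℝ) / β) ^ 4 + 96 * ((α : ℝ) / β) ^ 2 + 8))) := by
  refine Tendsto.mono_left ?_ inf_le_left
  have hβ' : (β : ℝ) ≠ 0 := by positivity
  rw [← slope_leading_ratio_eq hβ']
  exact tendsto_div_of_tendsto_div_pow (tendsto_chernC1Sq_div_pow_five hG hS)
    (tendsto_chernC2_div_pow_five hG) (by positivity)

/-- with `n = 12αp`, `t₂, t_{2,1}, t_{2,2}` as in the spin construction,
`c̄₁² = n⁴ + 2t₂ − 40d − 48`, `c̄₂ = n⁴/3 + t₂ − 16d − 12`,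
`C₁²(p) = 4p·c̄₁² − 2(t₂ + 2G(p)) + S(p)/(4p) − ((4p−1)/(2p))t_{2,1} − ((2p²+1)/(2p))t_{2,2}`
and `C₂(p) = 4p·c̄₂ − (t₂ + 2G(p)) + (4p−1)t_{2,1} + 3t_{2,2}`, where `G` and `S` grow at
most like `O(p³)`, we have `C₁²(p)/C₂(p) → (108x⁴+132x²+11)/(36x⁴+96x²+8)` as the prime
`p → ∞`, with `x = α/β`. -/
theorem spin_chern_slope_limit (α β d : ℕ) (hα : 0 < α) (hβ : 0 < β) (hd : 0 < d)
    (G S : ℕ → ℝ) (CG CS : ℝ)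
    (hG : ∀ p : ℕ, |G p| ≤ CG * (p : ℝ) ^ 3) (hS : ∀ p : ℕ, |S p| ≤ CS * (p : ℝ) ^ 3) :
    Tendsto (fun p : ℕ =>
      let q : ℝ := (p : ℝ)
      let t2 : ℝ := 13824 * (β : ℝ) ^ 2 * (α : ℝ) ^ 2 * q ^ 4 + 1152 * (β : ℝ) ^ 4 * q ^ 4 +
        4608 * (d : ℝ) * (α : ℝ) ^ 2 * q ^ 2 + 768 * (d : ℝ) * (β : ℝ) ^ 2 * q ^ 2 +
        32 * (d : ℝ) ^ 2 - 100 * (d : ℝ)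
      let t21 : ℝ := 384 * (β : ℝ) ^ 4 * q ^ 4 + 4608 * (α : ℝ) ^ 2 * (β : ℝ) ^ 2 * q ^ 4 +
        2304 * (d : ℝ) * (α : ℝ) ^ 2 * q ^ 2 - 52 * (d : ℝ) +
        384 * (d : ℝ) * (β : ℝ) ^ 2 * q ^ 2 + 16 * (d : ℝ) ^ 2
      let t22 : ℝ := 768 * (β : ℝ) ^ 4 * q ^ 4 + 9216 * (α : ℝ) ^ 2 * (β : ℝ) ^ 2 * q ^ 4 +
        2304 * (d : ℝ) * (α : ℝ) ^ 2 * q ^ 2 - 48 * (d : ℝ) +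
        384 * (d : ℝ) * (β : ℝ) ^ 2 * q ^ 2 + 16 * (d : ℝ) ^ 2
      let n4 : ℝ := (12 * (α : ℝ) * q) ^ 4
      let cbar1 : ℝ := n4 + 2 * t2 - 40 * (d : ℝ) - 48
      let cbar2 : ℝ := n4 / 3 + t2 - 16 * (d : ℝ) - 12
      let C1 : ℝ := 4 * q * cbar1 - 2 * (t2 + 2 * G p) + S p / (4 * q) -
        ((4 * q - 1) / (2 * q)) * t21 - ((2 * q ^ 2 + 1) / (2 * q)) * t22
      let C2 : ℝ := 4 * q * cbar2 - (t2 + 2 * G p) + (4 * q - 1) * t21 + 3 * t22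
      C1 / C2)
      (atTop ⊓ Filter.principal {p : ℕ | p.Prime})
      (nhds ((108 * ((α : ℝ) / β) ^ 4 + 132 * ((α : ℝ) / β) ^ 2 + 11) /
        (36 * ((α : ℝ) / β) ^ 4 + 96 * ((α : ℝ) / β) ^ 2 + 8))) :=
  spin_chern_slope_limit_general α β d hβ G S CG CS hG hS
end
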